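/- arXiv:2406.02145 — 2 statements merged into one kernel-verified Lean document; each statement's English description precedes it below -/
import Mathlib

section
/- Jensen-type estimate for periodic Heisenberg convolutions: let p ≥ 1, let m : ℝ³ → [0,∞) be measurable, 1_H-periodic, with ∫_{Q_H} m dx = 1; let w : ℝ³ → ℝ be measurable, 1_H-periodic and bounded, and set E := w·m; let ρ : ℝ³ → [0,∞) be measurable with ∫_{ℝ³} ρ dx = 1. Then, with the convention that the quotient term is 0 at points where (m∗ρ)(x) = 0, ∫_{Q_H} |(E∗ρ)(x)/(m∗ρ)(x)|^p (m∗ρ)(x) dx ≤ ∫_{Q_H} |w(x)|^p m(x) dx. -/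
open MeasureTheory

noncomputable section

/-- The Heisenberg group operation on ℝ³. -/
def Hop (x y : Fin 3 → ℝ) : Fin 3 → ℝ :=
  ![x 0 + y 0, x 1 + y 1, x 2 + y 2 - x 1 * y 0 + x 0 * y 1]

/-- The unit cube Q_H = [0,1)³. -/
def QH : Set (Fin 3 → ℝ) := {q | ∀ i, q i ∈ Set.Ico (0 : ℝ) 1}

/-- Membership in the integer lattice ℤ³ ⊂ ℝ³. -/
def IsLatticePoint (n : Fin 3 → ℝ) : Prop := ∀ i, ∃ k : ℤ, n i = (k : ℝ)

/-- `1_H`-periodicity of a function. -/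
def IsHPeriodic (f : (Fin 3 → ℝ) → ℝ) : Prop :=
  ∀ n : Fin 3 → ℝ, IsLatticePoint n → ∀ x, f (Hop n x) = f x

/-- The Heisenberg convolution `(f∗ρ)(x) = ∫ f(y) ρ(x ⊕ y⁻¹) dy`. -/
def Hconv (f ρ : (Fin 3 → ℝ) → ℝ) (x : Fin 3 → ℝ) : ℝ :=
  ∫ y, f y * ρ (Hop x (-y))

/-!
Fix `x` and put `d y = m y * ρ (x ⊕ y⁻¹)`, so that `(m∗ρ)(x) = ∫ d` and `(E∗ρ)(x) = ∫ w d`.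
Jensen's inequality for the probability measure `d / ∫ d` bounds the integrand at `x` by
`(g∗ρ)(x)` with `g = |w|^p m`. Integrating over `Q_H` and substituting `y = z⁻¹ ⊕ x`, Tonelli
turns `∫_{Q_H} g∗ρ` into `∫ ρ(z) ∫_{Q_H} g(z⁻¹ ⊕ x) dx dz`, and the inner integral is `∫_{Q_H} g`:
in coordinates a left translation shifts the last variable by an affine function of the first
two, and `1_H`-periodicity makes the fibre integrals `1`-periodic in each coordinate.
Since `g∗ρ` may be infinite at some points, these integrals are lower Lebesgue integrals.
-/

open Set Function
open scoped ENNReal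

theorem Function.Periodic.setLIntegral_Ico_add {k : ℝ → ℝ≥0∞} {T : ℝ} (hk : Periodic k T)
    (hT : 0 < T) (c : ℝ) : ∫⁻ t in Ico 0 T, k (t + c) = ∫⁻ t in Ico 0 T, k t := by
  have hinv (g : AddSubgroup.zmultiples T) (t : ℝ) : k (g +ᵥ t) = k t := by
    obtain ⟨n, hn⟩ := AddSubgroup.mem_zmultiples_iff.1 g.2
    rw [AddSubgroup.vadd_def, vadd_eq_add, ← hn, add_comm]
    exact hk.zsmul n t
  calc ∫⁻ t in Ico 0 T, k (t + c) = ∫⁻ t in Ico c (c + T), k t := by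
        simpa using (measurePreserving_add_right volume c).setLIntegral_comp_preimage_emb
          (measurableEmbedding_addRight c) k (Ico c (c + T))
    _ = ∫⁻ t in Ioc c (c + T), k t := setLIntegral_congr Ico_ae_eq_Ioc
    _ = ∫⁻ t in Ioc 0 (0 + T), k t :=
        (isAddFundamentalDomain_Ioc hT c).setLIntegral_eq (isAddFundamentalDomain_Ioc hT 0) k hinv
    _ = ∫⁻ t in Ico 0 T, k t := by rw [zero_add]; exact setLIntegral_congr Ico_ae_eq_Ioc.symm

theorem QH_eq_pi : QH = univ.pi fun _ => Ico (0 : ℝ) 1 := by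
  ext x; simp [QH]

theorem lintegral_QH_eq_iterated {F : (Fin 3 → ℝ) → ℝ≥0∞} (hF : Measurable F) :
    ∫⁻ x in QH, F x =
      ∫⁻ s in Ico 0 1, ∫⁻ t in Ico 0 1, ∫⁻ u in Ico 0 1, F ![s, t, u] := by
  set μ : Measure ℝ := volume.restrict (Ico 0 1)
  have hQH : volume.restrict QH = Measure.pi fun _ : Fin 3 => μ := by
    rw [QH_eq_pi, volume_pi, Measure.restrict_pi_pi]
  rw [hQH, ← (measurePreserving_piFinSuccAbove (fun _ : Fin 3 => μ) 0).symm.lintegral_comp hF,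
    lintegral_prod _ (by fun_prop)]
  refine lintegral_congr fun s => ?_
  rw [← (measurePreserving_finTwoArrow μ).symm.lintegral_comp (by fun_prop),
    lintegral_prod _ (by fun_prop)]
  refine lintegral_congr fun t => lintegral_congr fun u => congrArg F ?_
  ext i; fin_cases i <;> rfl

theorem abs_integral_mul_div_rpow_mul_le {α : Type*} [MeasurableSpace α] {μ : Measure α}
    {p M : ℝ} (hp : 1 ≤ p) {w d : α → ℝ} (hw : Measurable w) (hM : ∀ y, |w y| ≤ M)
    (hd : Measurable d) (hd0 : ∀ y, 0 ≤ d y) :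
    |(∫ y, w y * d y ∂μ) / ∫ y, d y ∂μ| ^ p * ∫ y, d y ∂μ ≤ ∫ y, |w y| ^ p * d y ∂μ := by
  obtain hc | hc := (integral_nonneg hd0 : 0 ≤ ∫ y, d y ∂μ).eq_or_lt
  · rw [← hc, mul_zero]
    exact integral_nonneg fun y => mul_nonneg (by positivity) (hd0 y)
  have hdi : Integrable d μ := by
    by_contra h
    exact hc.ne' (integral_undef h)
  set ν := μ.withDensity fun y => ENNReal.ofReal (d y)
  have hν : ν univ = ENNReal.ofReal (∫ y, d y ∂μ) := by
    rw [withDensity_apply _ MeasurableSet.univ, Measure.restrict_univ,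
      ofReal_integral_eq_lintegral_ofReal hdi (ae_of_all _ hd0)]
  have : IsFiniteMeasure ν := ⟨by simp [hν]⟩
  have : NeZero ν := ⟨fun h => by simp [h, ← not_lt, hc] at hν⟩
  have havg (f : α → ℝ) : ⨍ y, f y ∂ν = (∫ y, f y * d y ∂μ) / ∫ y, d y ∂μ := by
    rw [average_eq, measureReal_def, hν, ENNReal.toReal_ofReal hc.le, smul_eq_mul,
      integral_withDensity_eq_integral_toReal_smul (by fun_prop) (ae_of_all _ fun _ => by simp),
      inv_mul_eq_div]
    simp_rw [ENNReal.toReal_ofReal (hd0 _), smul_eq_mul, mul_comm]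
  have hbdd {f : α → ℝ} (hf : Measurable f) {C : ℝ} (hC : ∀ y, |f y| ≤ C) : Integrable f ν :=
    .of_bound hf.aestronglyMeasurable C (ae_of_all _ hC)
  have hp0 : 0 ≤ p := by linarith
  have hjensen : (⨍ y, |w y| ∂ν) ^ p ≤ ⨍ y, |w y| ^ p ∂ν :=
    (convexOn_rpow hp).map_average_le (Real.continuous_rpow_const hp0).continuousOn isClosed_Ici
      (ae_of_all _ fun y => abs_nonneg (w y))
      (hbdd (by fun_prop) fun y => (abs_abs _).trans_le (hM y))
      (hbdd (C := M ^ p) (by fun_prop) fun y => by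
        rw [comp_apply, abs_of_nonneg (Real.rpow_nonneg (abs_nonneg _) p)]
        exact Real.rpow_le_rpow (abs_nonneg _) (hM y) hp0)
  have habs : |∫ y, w y * d y ∂μ| ≤ ∫ y, |w y| * d y ∂μ := by
    simpa only [abs_mul, abs_of_nonneg (hd0 _)] using
      abs_integral_le_integral_abs (f := fun y => w y * d y) (μ := μ)
  calc |(∫ y, w y * d y ∂μ) / ∫ y, d y ∂μ| ^ p * ∫ y, d y ∂μ
      ≤ (⨍ y, |w y| ∂ν) ^ p * ∫ y, d y ∂μ := by
        rw [havg, abs_div, abs_of_pos hc]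
        gcongr
    _ ≤ (⨍ y, |w y| ^ p ∂ν) * ∫ y, d y ∂μ := by gcongr
    _ = ∫ y, |w y| ^ p * d y ∂μ := by rw [havg, div_mul_cancel₀ _ hc.ne']

theorem isLatticePoint_intCast (i j k : ℤ) : IsLatticePoint ![(i : ℝ), j, k] := by
  intro l
  fin_cases l
  exacts [⟨i, rfl⟩, ⟨j, rfl⟩, ⟨k, rfl⟩]

theorem hop_vec (a : Fin 3 → ℝ) (s t u : ℝ) :
    Hop a ![s, t, u] = ![s + a 0, t + a 1, u + (a 2 - a 1 * s + a 0 * t)] := by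
  ext i; fin_cases i <;> simp [Hop] <;> ring

theorem hop_neg_hop_neg (x z : Fin 3 → ℝ) : Hop x (-Hop (-z) x) = z := by
  ext i; fin_cases i <;> simp [Hop]; ring

@[fun_prop]
theorem Measurable.hop {α : Type*} [MeasurableSpace α] {f g : α → Fin 3 → ℝ}
    (hf : Measurable f) (hg : Measurable g) : Measurable fun x => Hop (f x) (g x) := by
  refine measurable_pi_lambda _ fun i => ?_
  fin_cases i <;> simp [Hop] <;> fun_prop

theorem measurePreserving_hop_right (a : Fin 3 → ℝ) :
    MeasurePreserving (fun z => Hop z a) volume volume := by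
  set A : Matrix (Fin 3) (Fin 3) ℝ := !![1, 0, 0; 0, 1, 0; a 1, -a 0, 1]
  have hdet : LinearMap.det (Matrix.toLin' A) = 1 := by
    simp [LinearMap.det_toLin', A, Matrix.det_fin_three]
  have hA : MeasurePreserving (Matrix.toLin' A) volume volume :=
    ⟨(Matrix.toLin' A).continuous_of_finiteDimensional.measurable, by
      rw [Real.map_linearMap_volume_pi_eq_smul_volume_pi (by simp [hdet]), hdet]; simp⟩
  convert (measurePreserving_add_right volume a).comp hA using 1
  ext z i
  fin_cases i <;> simp [Hop, A, dotProduct, Fin.sum_univ_three]; ring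

section LatticePeriodic

variable {h : (Fin 3 → ℝ) → ℝ≥0∞} (hper : ∀ n, IsLatticePoint n → ∀ x, h (Hop n x) = h x)
include hper

theorem periodic_apply_vec_third (s t : ℝ) :
    Periodic (fun u => h ![s, t, u]) 1 := fun u => by
  simpa [hop_vec] using hper _ (isLatticePoint_intCast 0 0 1) ![s, t, u]

theorem periodic_lintegral_Ico_apply_vec_snd (s : ℝ) :
    Periodic (fun t => ∫⁻ u in Ico 0 1, h ![s, t, u]) 1 := fun t => by
  have (u : ℝ) : h ![s, t + 1, u] = h ![s, t, u + s] := by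
    simpa [hop_vec, add_comm] using hper _ (isLatticePoint_intCast 0 1 0) ![s, t, u + s]
  simp_rw [this]
  exact (periodic_apply_vec_third hper s t).setLIntegral_Ico_add one_pos s

theorem periodic_lintegral_Ico_apply_vec_fst (t : ℝ) :
    Periodic (fun s => ∫⁻ u in Ico 0 1, h ![s, t, u]) 1 := fun s => by
  have (u : ℝ) : h ![s + 1, t, u] = h ![s, t, u - t] := by
    simpa [hop_vec, add_comm] using hper _ (isLatticePoint_intCast 1 0 0) ![s, t, u - t]
  simp_rw [this, sub_eq_add_neg]
  exact (periodic_apply_vec_third hper s t).setLIntegral_Ico_add one_pos (-t)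

theorem lintegral_QH_comp_hop_left (hh : Measurable h) (a : Fin 3 → ℝ) :
    ∫⁻ x in QH, h (Hop a x) = ∫⁻ x in QH, h x := by
  rw [lintegral_QH_eq_iterated (by fun_prop), lintegral_QH_eq_iterated hh]
  set K : ℝ → ℝ → ℝ≥0∞ := fun s t => ∫⁻ u in Ico 0 1, h ![s, t, u]
  have hK : Periodic (fun s => ∫⁻ t in Ico 0 1, K s t) 1 := fun s =>
    lintegral_congr fun t => periodic_lintegral_Ico_apply_vec_fst hper t s
  calc ∫⁻ s in Ico 0 1, ∫⁻ t in Ico 0 1, ∫⁻ u in Ico 0 1, h (Hop a ![s, t, u])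
      = ∫⁻ s in Ico 0 1, ∫⁻ t in Ico 0 1, K (s + a 0) (t + a 1) := by
        simp_rw [hop_vec, (periodic_apply_vec_third hper _ _).setLIntegral_Ico_add one_pos]
        rfl
    _ = ∫⁻ s in Ico 0 1, ∫⁻ t in Ico 0 1, K (s + a 0) t := lintegral_congr fun s =>
        (periodic_lintegral_Ico_apply_vec_snd hper _).setLIntegral_Ico_add one_pos _
    _ = ∫⁻ s in Ico 0 1, ∫⁻ t in Ico 0 1, K s t := hK.setLIntegral_Ico_add one_pos _

theorem lintegral_QH_lintegral_mul_hop (hh : Measurable h) {R : (Fin 3 → ℝ) → ℝ≥0∞}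
    (hR : Measurable R) :
    ∫⁻ x in QH, ∫⁻ y, h y * R (Hop x (-y)) = (∫⁻ z, R z) * ∫⁻ x in QH, h x := by
  have hsubst (x : Fin 3 → ℝ) :
      ∫⁻ y, h y * R (Hop x (-y)) = ∫⁻ z, R z * h (Hop (-z) x) := by
    rw [← ((measurePreserving_hop_right x).comp (Measure.measurePreserving_neg _)).lintegral_comp
      (by fun_prop)]
    simp [hop_neg_hop_neg, mul_comm]
  calc ∫⁻ x in QH, ∫⁻ y, h y * R (Hop x (-y))
      = ∫⁻ z, ∫⁻ x in QH, R z * h (Hop (-z) x) := by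
        simp_rw [hsubst]
        exact lintegral_lintegral_swap (by fun_prop)
    _ = ∫⁻ z, R z * ∫⁻ x in QH, h x := lintegral_congr fun z => by
        rw [lintegral_const_mul _ (by fun_prop), lintegral_QH_comp_hop_left hper hh]
    _ = (∫⁻ z, R z) * ∫⁻ x in QH, h x := lintegral_mul_const _ hR

end LatticePeriodic

theorem enorm_ite_hconv_div_rpow_mul_le {p M : ℝ} (hp : 1 ≤ p) {m w ρ : (Fin 3 → ℝ) → ℝ}
    (hm : Measurable m) (hm0 : ∀ x, 0 ≤ m x) (hw : Measurable w) (hM : ∀ x, |w x| ≤ M)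
    (hρ : Measurable ρ) (hρ0 : ∀ x, 0 ≤ ρ x) (x : Fin 3 → ℝ) :
    ‖if Hconv m ρ x = 0 then 0
      else |Hconv (fun y => w y * m y) ρ x / Hconv m ρ x| ^ p * Hconv m ρ x‖ₑ ≤
      ∫⁻ y, ENNReal.ofReal (|w y| ^ p * m y) * ENNReal.ofReal (ρ (Hop x (-y))) := by
  split_ifs
  · simp
  have hd0 (y : Fin 3 → ℝ) : 0 ≤ m y * ρ (Hop x (-y)) := mul_nonneg (hm0 y) (hρ0 _)
  have hjensen := abs_integral_mul_div_rpow_mul_le (μ := volume) hp hw hM (by fun_prop) hd0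
  simp only [← mul_assoc] at hjensen
  simp only [Hconv]
  rw [Real.enorm_eq_ofReal (mul_nonneg (by positivity) (integral_nonneg hd0))]
  calc ENNReal.ofReal _ ≤ ENNReal.ofReal (∫ y, |w y| ^ p * m y * ρ (Hop x (-y))) :=
        ENNReal.ofReal_le_ofReal hjensen
    _ ≤ ∫⁻ y, ‖|w y| ^ p * m y * ρ (Hop x (-y))‖ₑ :=
        (Real.ofReal_le_enorm _).trans (enorm_integral_le_lintegral_enorm _)
    _ = _ := lintegral_congr fun y => by
        rw [Real.enorm_eq_ofReal (by simpa [mul_assoc] using mul_nonneg (by positivity) (hd0 y)),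
          ENNReal.ofReal_mul (by simpa using mul_nonneg (by positivity) (hm0 y))]

theorem jensen_periodic_convolution_general
    (p : ℝ) (hp : 1 ≤ p)
    (m w ρ : (Fin 3 → ℝ) → ℝ)
    (hm : Measurable m) (hm0 : ∀ x, 0 ≤ m x) (hmper : IsHPeriodic m)
    (hmint : IntegrableOn m QH volume)
    (hw : Measurable w) (hwper : IsHPeriodic w) (hwb : ∃ M, ∀ x, |w x| ≤ M)
    (hρ : Measurable ρ) (hρ0 : ∀ x, 0 ≤ ρ x)
    (hρint : Integrable ρ volume) (hρ1 : ∫ x, ρ x = 1) :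
    ∫ x in QH,
        (if Hconv m ρ x = 0 then 0
         else |Hconv (fun y => w y * m y) ρ x / Hconv m ρ x| ^ p * Hconv m ρ x)
      ≤ ∫ x in QH, |w x| ^ p * m x := by
  obtain ⟨M, hM⟩ := hwb
  have hg0 (x : Fin 3 → ℝ) : 0 ≤ |w x| ^ p * m x := mul_nonneg (by positivity) (hm0 x)
  have hg : IntegrableOn (fun x => |w x| ^ p * m x) QH := by
    refine hmint.bdd_mul (c := M ^ p) (hw.abs.pow_const p).aestronglyMeasurable
      (ae_of_all _ fun x => ?_)
    rw [Real.norm_eq_abs, abs_of_nonneg (by positivity)]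
    exact Real.rpow_le_rpow (abs_nonneg _) (hM x) (by linarith)
  have hgper (n : Fin 3 → ℝ) (hn : IsLatticePoint n) (x : Fin 3 → ℝ) :
      ENNReal.ofReal (|w (Hop n x)| ^ p * m (Hop n x)) = ENNReal.ofReal (|w x| ^ p * m x) := by
    rw [hwper n hn, hmper n hn]
  have hρ1' : ∫⁻ z, ENNReal.ofReal (ρ z) = 1 := by
    rw [← ofReal_integral_eq_lintegral_ofReal hρint (ae_of_all _ hρ0), hρ1, ENNReal.ofReal_one]
  refine (ENNReal.ofReal_le_ofReal_iff (integral_nonneg hg0)).1 ?_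
  calc ENNReal.ofReal _ ≤ ∫⁻ x in QH, ‖if Hconv m ρ x = 0 then 0
          else |Hconv (fun y => w y * m y) ρ x / Hconv m ρ x| ^ p * Hconv m ρ x‖ₑ :=
        (Real.ofReal_le_enorm _).trans (enorm_integral_le_lintegral_enorm _)
    _ ≤ ∫⁻ x in QH, ∫⁻ y, ENNReal.ofReal (|w y| ^ p * m y) * ENNReal.ofReal (ρ (Hop x (-y))) :=
        lintegral_mono fun x => enorm_ite_hconv_div_rpow_mul_le hp hm hm0 hw hM hρ hρ0 x
    _ = ∫⁻ x in QH, ENNReal.ofReal (|w x| ^ p * m x) := by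
        rw [lintegral_QH_lintegral_mul_hop (h := fun x => ENNReal.ofReal (|w x| ^ p * m x)) hgper
          (R := fun z => ENNReal.ofReal (ρ z)) (by fun_prop) (by fun_prop), hρ1', one_mul]
    _ = ENNReal.ofReal (∫ x in QH, |w x| ^ p * m x) :=
        (ofReal_integral_eq_lintegral_ofReal hg (ae_of_all _ hg0)).symm

/-- Jensen-type estimate for periodic Heisenberg convolutions (Lemma 8.1.10 analogue):
for `p ≥ 1`, `m ≥ 0` measurable `1_H`-periodic with `∫_{Q_H} m = 1`, `w` measurable
bounded `1_H`-periodic, `E := w·m`, and `ρ ≥ 0` with `∫ ρ = 1`, one has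
`∫_{Q_H} |(E∗ρ)/(m∗ρ)|^p (m∗ρ) dx ≤ ∫_{Q_H} |w|^p m dx`, with the convention that the
quotient term vanishes where `m∗ρ = 0`. -/
theorem jensen_periodic_convolution
    (p : ℝ) (hp : 1 ≤ p)
    (m w ρ : (Fin 3 → ℝ) → ℝ)
    (hm : Measurable m) (hm0 : ∀ x, 0 ≤ m x) (hmper : IsHPeriodic m)
    (hmint : IntegrableOn m QH volume) (hm1 : ∫ x in QH, m x = 1)
    (hw : Measurable w) (hwper : IsHPeriodic w) (hwb : ∃ M, ∀ x, |w x| ≤ M)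
    (hρ : Measurable ρ) (hρ0 : ∀ x, 0 ≤ ρ x)
    (hρint : Integrable ρ volume) (hρ1 : ∫ x, ρ x = 1) :
    ∫ x in QH,
        (if Hconv m ρ x = 0 then 0
         else |Hconv (fun y => w y * m y) ρ x / Hconv m ρ x| ^ p * Hconv m ρ x)
      ≤ ∫ x in QH, |w x| ^ p * m x :=
  jensen_periodic_convolution_general p hp m w ρ hm hm0 hmper hmint hw hwper hwb hρ hρ0 hρint hρ1
end
end

section
/- Periodicity of the value function (Lemma uper): let T > 0, let f : ℝ³ × [0,T] → ℝ be continuous, bounded, and 1_H-periodic in x, and let g : ℝ³ → ℝ be continuous, bounded, and 1_H-periodic. Then the value function u satisfies u(n ⊕ x, t) = u(x, t) for every n ∈ ℤ³, x ∈ ℝ³, t ∈ [0,T]. -/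
open MeasureTheory

noncomputable section

/-- `α B^T(x) := (α₁, α₂, −x₂α₁ + x₁α₂)`. -/
def Bmul (α : Fin 2 → ℝ) (x : Fin 3 → ℝ) : Fin 3 → ℝ :=
  ![α 0, α 1, -(x 1) * α 0 + x 0 * α 1]

/-- `(γ,α) ∈ A(x,t)`: `α ∈ L²([t,T];ℝ²)` and `γ(s) = x + ∫_t^s α Bᵀ(γ)` on `[t,T]`. -/
def Admissible (T t : ℝ) (x : Fin 3 → ℝ)
    (γ : ℝ → Fin 3 → ℝ) (α : ℝ → Fin 2 → ℝ) : Prop :=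
  MemLp α 2 (volume.restrict (Set.Icc t T)) ∧
  ∀ s ∈ Set.Icc t T, γ s = x + ∫ τ in t..s, Bmul (α τ) (γ τ)

/-- The cost `J_t(γ,α) = ∫_t^T (½|α|² + f(γ(s),s)) ds + g(γ(T))`. -/
def cost (T : ℝ) (f : (Fin 3 → ℝ) → ℝ → ℝ) (g : (Fin 3 → ℝ) → ℝ) (t : ℝ)
    (γ : ℝ → Fin 3 → ℝ) (α : ℝ → Fin 2 → ℝ) : ℝ :=
  (∫ s in t..T, ((1 : ℝ) / 2 * ((α s 0) ^ 2 + (α s 1) ^ 2) + f (γ s) s)) + g (γ T)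

/-- The value function `u(x,t) = inf { J_t(γ,α) : (γ,α) ∈ A(x,t) }`. -/
def val (T : ℝ) (f : (Fin 3 → ℝ) → ℝ → ℝ) (g : (Fin 3 → ℝ) → ℝ)
    (x : Fin 3 → ℝ) (t : ℝ) : ℝ :=
  sInf {c | ∃ γ α, Admissible T t x γ α ∧ c = cost T f g t γ α}

/-!
Left translation `y ↦ n ⊕ y` is affine, `n ⊕ y = n + Lₙ y` with `Lₙ` linear and invertible,
and `Lₙ (αBᵀ(y)) = αBᵀ(n ⊕ y)`: the horizontal fields are left-invariant. Since `Lₙ` commutes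
with integration, `s ↦ n ⊕ γ(s)` solves the control equation from `n ⊕ x` with the same
control `α`, and its cost equals that of `γ` when `f` and `g` are invariant under `n`.
Applied to `n` and `-n`, this shows that the sets of costs from `x` and from `n ⊕ x`
coincide, hence so do their infima.
-/

theorem ContinuousLinearEquiv.intervalIntegral_comp_comm {𝕜 E F : Type*} [RCLike 𝕜]
    [NormedAddCommGroup E] [NormedSpace ℝ E] [NormedSpace 𝕜 E]
    [NormedAddCommGroup F] [NormedSpace ℝ F] [NormedSpace 𝕜 F]
    (L : E ≃L[𝕜] F) (f : ℝ → E) (a b : ℝ) (μ : Measure ℝ) :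
    ∫ x in a..b, L (f x) ∂μ = L (∫ x in a..b, f x ∂μ) := by
  simp only [intervalIntegral, L.integral_comp_comm, map_sub]

def hopLinearPart (n : Fin 3 → ℝ) : (Fin 3 → ℝ) ≃L[ℝ] (Fin 3 → ℝ) :=
  LinearEquiv.toContinuousLinearEquiv
    { toFun := fun v => ![v 0, v 1, v 2 - n 1 * v 0 + n 0 * v 1]
      invFun := fun v => ![v 0, v 1, v 2 + n 1 * v 0 - n 0 * v 1]
      map_add' := fun v w => by funext i; fin_cases i <;> simp; ring
      map_smul' := fun c v => by funext i; fin_cases i <;> simp; ring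
      left_inv := fun v => by funext i; fin_cases i <;> simp; ring
      right_inv := fun v => by funext i; fin_cases i <;> simp; ring }

theorem hopLinearPart_apply (n v : Fin 3 → ℝ) :
    hopLinearPart n v = ![v 0, v 1, v 2 - n 1 * v 0 + n 0 * v 1] := rfl

theorem Hop_eq_add_hopLinearPart (n y : Fin 3 → ℝ) : Hop n y = n + hopLinearPart n y := by
  funext i; fin_cases i <;> simp [Hop, hopLinearPart_apply]; ring

theorem Hop_add (n x v : Fin 3 → ℝ) : Hop n (x + v) = Hop n x + hopLinearPart n v := by
  rw [Hop_eq_add_hopLinearPart, Hop_eq_add_hopLinearPart, map_add, add_assoc]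

theorem Bmul_Hop (α : Fin 2 → ℝ) (n y : Fin 3 → ℝ) :
    Bmul α (Hop n y) = hopLinearPart n (Bmul α y) := by
  funext i; fin_cases i <;> simp [Bmul, Hop, hopLinearPart_apply]; ring

theorem Hop_neg_Hop (n x : Fin 3 → ℝ) : Hop (-n) (Hop n x) = x := by
  funext i; fin_cases i <;> simp [Hop]; ring

theorem IsLatticePoint.neg {n : Fin 3 → ℝ} (h : IsLatticePoint n) : IsLatticePoint (-n) := by
  intro i
  obtain ⟨k, hk⟩ := h i
  exact ⟨-k, by simp [hk]⟩

theorem Admissible.Hop_left {T t : ℝ} {x : Fin 3 → ℝ} {γ : ℝ → Fin 3 → ℝ}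
    {α : ℝ → Fin 2 → ℝ} (h : Admissible T t x γ α) (n : Fin 3 → ℝ) :
    Admissible T t (Hop n x) (fun s => Hop n (γ s)) α := by
  refine ⟨h.1, fun s hs => ?_⟩
  simp only [Bmul_Hop, (hopLinearPart n).intervalIntegral_comp_comm, h.2 s hs, Hop_add]

section Invariance

variable (T : ℝ) {f : (Fin 3 → ℝ) → ℝ → ℝ} {g : (Fin 3 → ℝ) → ℝ} {n : Fin 3 → ℝ}
  (hf : ∀ x t, f (Hop n x) t = f x t) (hg : ∀ x, g (Hop n x) = g x)
include hf hg

theorem cost_Hop_left (t : ℝ) (γ : ℝ → Fin 3 → ℝ) (α : ℝ → Fin 2 → ℝ) :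
    cost T f g t (fun s => Hop n (γ s)) α = cost T f g t γ α := by
  simp only [cost, hf, hg]

theorem costs_subset_costs_Hop (x : Fin 3 → ℝ) (t : ℝ) :
    {c | ∃ γ α, Admissible T t x γ α ∧ c = cost T f g t γ α} ⊆
      {c | ∃ γ α, Admissible T t (Hop n x) γ α ∧ c = cost T f g t γ α} := by
  rintro c ⟨γ, α, hadm, rfl⟩
  exact ⟨_, α, hadm.Hop_left n, (cost_Hop_left T hf hg t γ α).symm⟩

end Invariance

theorem value_function_periodic_general
    (T : ℝ)
    (f : (Fin 3 → ℝ) → ℝ → ℝ) (g : (Fin 3 → ℝ) → ℝ)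
    (hfper : ∀ n : Fin 3 → ℝ, IsLatticePoint n → ∀ x t, f (Hop n x) t = f x t)
    (hgper : ∀ n : Fin 3 → ℝ, IsLatticePoint n → ∀ x, g (Hop n x) = g x) :
    ∀ n : Fin 3 → ℝ, IsLatticePoint n → ∀ x : Fin 3 → ℝ, ∀ t ∈ Set.Icc 0 T,
      val T f g (Hop n x) t = val T f g x t := by
  intro n hn x t _
  refine congrArg sInf (Set.Subset.antisymm ?_ <|
    costs_subset_costs_Hop T (hfper n hn) (hgper n hn) x t)
  simpa only [Hop_neg_Hop] using
    costs_subset_costs_Hop T (hfper (-n) hn.neg) (hgper (-n) hn.neg) (Hop n x) t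

/-- Periodicity of the value function (Lemma uper): if `f` and `g` are continuous,
bounded and `1_H`-periodic in `x`, then `u(n ⊕ x, t) = u(x, t)` for all `n ∈ ℤ³`,
`x ∈ ℝ³`, `t ∈ [0,T]`. -/
theorem value_function_periodic
    (T : ℝ) (hT : 0 < T)
    (f : (Fin 3 → ℝ) → ℝ → ℝ) (g : (Fin 3 → ℝ) → ℝ)
    (hfc : Continuous fun p : (Fin 3 → ℝ) × ℝ => f p.1 p.2)
    (hfb : ∃ M, ∀ x t, |f x t| ≤ M)
    (hfper : ∀ n : Fin 3 → ℝ, IsLatticePoint n → ∀ x t, f (Hop n x) t = f x t)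
    (hgc : Continuous g) (hgb : ∃ M, ∀ x, |g x| ≤ M)
    (hgper : ∀ n : Fin 3 → ℝ, IsLatticePoint n → ∀ x, g (Hop n x) = g x) :
    ∀ n : Fin 3 → ℝ, IsLatticePoint n → ∀ x : Fin 3 → ℝ, ∀ t ∈ Set.Icc 0 T,
      val T f g (Hop n x) t = val T f g x t :=
  value_function_periodic_general T f g hfper hgper
end
end
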